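/- Let D >= 1 and l >= 2 an integer. There exists an RNN R = Q∘K with input dimension 2^{l-2}+1, output dimension 2^{l-1}+1, and hidden state size at most 10·2^l such that for all x ∈ [-D^{2^{l-1}}, D^{2^{l-1}}]^{2^{l-2}+1} and all t ∈ ℕ₀: ‖(R D x)[t] - f_l(x)‖_∞ <= (D^{2^l}/2) * 4^{-t}, ‖(R D x)[t]‖_∞ <= D^{2^l}, and ‖(K D x)[t]‖_∞ <= D. -/

import Mathlib

/-- ReLU applied componentwise. -/
noncomputable def relu {n : Type*} (v : n → ℝ) : n → ℝ := fun i => max 0 (v i)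

/-- An RNN with input index type `ι`, hidden state index type `κ`, output index type `ω`,
parametrized by weights `A_h, A_x, A_o, b_h, b_o`. -/
structure RNN (ι κ ω : Type) where
  Ah : Matrix κ κ ℝ
  Ax : Matrix κ ι ℝ
  Ao : Matrix ω κ ℝ
  bh : κ → ℝ
  bo : ω → ℝ

/-- Hidden state sequence `(K 𝒟 x)[t]` for the input sequence `(𝒟 x)[t] = x·1{t=0}`,
with the convention `h[-1] = 0`:  `h[0] = ρ(A_x x + b_h)`, `h[t+1] = ρ(A_h h[t] + b_h)`. -/
noncomputable def RNN.hid {ι κ ω : Type} [Fintype ι] [Fintype κ] (R : RNN ι κ ω)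
    (x : ι → ℝ) : ℕ → κ → ℝ
  | 0 => relu (R.Ax.mulVec x + R.bh)
  | t + 1 => relu (R.Ah.mulVec (RNN.hid R x t) + R.bh)

/-- Output sequence `(R 𝒟 x)[t] = A_o h[t] + b_o`. -/
noncomputable def RNN.out {ι κ ω : Type} [Fintype ι] [Fintype κ] (R : RNN ι κ ω)
    (x : ι → ℝ) (t : ℕ) : ω → ℝ :=
  R.Ao.mulVec (R.hid x t) + R.bo

/-- The map `f_ℓ : ℝ^{2^{ℓ−2}+1} → ℝ^{2^{ℓ−1}+1}` (for `ℓ ≥ 2`), written with 0-based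
indices: with `x_1, …, x_{2^{ℓ−2}+1}` the (1-based) coordinates of the input,
`f_ℓ(x)_1 = x_{2^{ℓ−2}} x_{2^{ℓ−2}+1}`, `f_ℓ(x)_{2k} = x_k²` for `k ∈ {1,…,2^{ℓ−2}}`,
`f_ℓ(x)_{2k+1} = x_k x_{k+1}` for `k ∈ {1,…,2^{ℓ−2}−1}`, and
`f_ℓ(x)_{2^{ℓ−1}+1} = x_{2^{ℓ−2}+1}`.  (Out-of-range accesses, which do not occur for
`ℓ ≥ 2`, default to `0`.) -/
noncomputable def fPoly (l : ℕ) (x : Fin (2 ^ (l - 2) + 1) → ℝ)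
    (i : Fin (2 ^ (l - 1) + 1)) : ℝ :=
  let x' : ℕ → ℝ := fun j => if h : j < 2 ^ (l - 2) + 1 then x ⟨j, h⟩ else 0
  if (i : ℕ) = 0 then x' (2 ^ (l - 2) - 1) * x' (2 ^ (l - 2))
  else if (i : ℕ) = 2 ^ (l - 1) then x' (2 ^ (l - 2))
  else if (i : ℕ) % 2 = 1 then (x' (((i : ℕ) + 1) / 2 - 1)) ^ 2
  else x' ((i : ℕ) / 2 - 1) * x' ((i : ℕ) / 2)


set_option synthInstance.maxSize 1024
noncomputable section
namespace S16

/-- The sawtooth generator. -/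
def g (y : ℝ) : ℝ := 2 * max 0 y - 4 * max 0 (y - 1/2)

lemma g_mem {y : ℝ} (h0 : 0 ≤ y) (h1 : y ≤ 1) : 0 ≤ g y ∧ g y ≤ 1 := by
  unfold g
  rcases le_total y (1/2) with h | h
  · rw [max_eq_right h0, max_eq_left (by linarith)]
    constructor <;> linarith
  · rw [max_eq_right h0, max_eq_right (by linarith)]
    constructor <;> linarith

lemma gi_mem (t : ℕ) {y : ℝ} (h0 : 0 ≤ y) (h1 : y ≤ 1) :
    0 ≤ g^[t] y ∧ g^[t] y ≤ 1 := by
  induction t generalizing y with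
  | zero => simpa using ⟨h0, h1⟩
  | succ t ih =>
    rw [Function.iterate_succ_apply]
    exact ih (g_mem h0 h1).1 (g_mem h0 h1).2

lemma sq_eq {y : ℝ} (h0 : 0 ≤ y) (h1 : y ≤ 1) :
    y^2 = y - g y / 2 + (g y)^2 / 4 := by
  unfold g
  rcases le_total y (1/2) with h | h
  · rw [max_eq_right h0, max_eq_left (by linarith)]; ring
  · rw [max_eq_right h0, max_eq_right (by linarith)]; ring

lemma g_zero : g 0 = 0 := by
  unfold g; rw [max_self, max_eq_left (by norm_num)]; ring

/-- Yarotsky approximation of the square. -/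
def F : ℕ → ℝ → ℝ
  | 0, w => w
  | t+1, w => F t w - g^[t+1] w * (1/4)^(t+1)

lemma F_rec (t : ℕ) (w : ℝ) : F (t+1) w = w - g w / 2 + F t (g w) / 4 := by
  induction t generalizing w with
  | zero =>
    show F 0 w - g^[1] w * (1/4)^1 = _
    simp [F]; ring
  | succ t ih =>
    show F (t+1) w - g^[t+2] w * (1/4)^(t+2) = _
    rw [ih, Function.iterate_succ_apply]
    show _ = w - g w / 2 + (F t (g w) - g^[t+1] (g w) * (1/4)^(t+1)) / 4
    ring

lemma F_err (t : ℕ) : ∀ {w : ℝ}, 0 ≤ w → w ≤ 1 →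
    0 ≤ F t w - w^2 ∧ F t w - w^2 ≤ 1/4 * (1/4)^t := by
  induction t with
  | zero =>
    intro w h0 h1
    constructor
    · simp only [F]; nlinarith
    · simp only [F, pow_zero, mul_one]; nlinarith [sq_nonneg (w - 1/2)]
  | succ t ih =>
    intro w h0 h1
    have hg := g_mem h0 h1
    have := ih hg.1 hg.2
    have key : F (t+1) w - w^2 = (F t (g w) - (g w)^2) / 4 := by
      rw [F_rec, sq_eq h0 h1]; ring
    constructor
    · rw [key]; linarith [this.1]
    · rw [key]
      have : (F t (g w) - (g w)^2) / 4 ≤ (1/4 * (1/4)^t)/4 := by linarith [this.2]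
      calc (F t (g w) - (g w)^2) / 4 ≤ (1/4 * (1/4)^t)/4 := this
        _ = 1/4 * (1/4)^(t+1) := by ring

lemma F_le (t : ℕ) {w : ℝ} (h0 : 0 ≤ w) (h1 : w ≤ 1) : F t w ≤ w := by
  induction t with
  | zero => simp [F]
  | succ t ih =>
    show F t w - g^[t+1] w * (1/4)^(t+1) ≤ w
    have := (gi_mem (t+1) h0 h1).1
    nlinarith [pow_pos (by norm_num : (0:ℝ) < 1/4) (t+1)]

lemma F_nonneg (t : ℕ) {w : ℝ} (h0 : 0 ≤ w) (h1 : w ≤ 1) : 0 ≤ F t w := by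
  have := (F_err t h0 h1).1
  nlinarith

lemma F_zero (t : ℕ) : F t 0 = 0 := by
  induction t with
  | zero => simp [F]
  | succ t ih =>
    show F t 0 - g^[t+1] 0 * (1/4)^(t+1) = 0
    rw [ih, Function.iterate_fixed g_zero]
    ring

/-- Combined lemma for a signed value `v` with `|v| ≤ 1`. -/
lemma F_pm (t : ℕ) {v : ℝ} (h : |v| ≤ 1) :
    0 ≤ F t (max 0 v) + F t (max 0 (-v)) ∧
    F t (max 0 v) + F t (max 0 (-v)) ≤ 1 ∧
    |F t (max 0 v) + F t (max 0 (-v)) - v^2| ≤ 1/4 * (1/4)^t := by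
  rcases le_total 0 v with hv | hv
  · have h1 : v ≤ 1 := by rw [abs_of_nonneg hv] at h; exact h
    rw [max_eq_right hv, max_eq_left (by linarith), F_zero]
    have he := F_err t hv h1
    refine ⟨by linarith [F_nonneg t hv h1], by linarith [F_le t hv h1], ?_⟩
    rw [add_zero, abs_le]
    constructor <;> linarith [he.1, he.2]
  · have h1 : -v ≤ 1 := by rw [abs_of_nonpos hv] at h; exact h
    have h0 : 0 ≤ -v := by linarith
    rw [max_eq_left hv, max_eq_right h0, F_zero]
    have he := F_err t h0 h1
    have hsq : (-v)^2 = v^2 := by ring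
    rw [hsq] at he
    refine ⟨by linarith [F_nonneg t h0 h1], by linarith [F_le t h0 h1], ?_⟩
    rw [zero_add, abs_le]
    constructor <;> linarith [he.1, he.2]

end S16
open S16 in
section
variable {m : ℕ}

namespace S16

/-- Square targets: `inl (i,b)` is `relu(±x_i/M)`; `inr (k,j)` are the four
half-sum/half-difference targets for the adjacent pair `(k, k+1)`. -/
abbrev Tgt (m : ℕ) := (Fin (m+2) × Bool) ⊕ (Fin (m+1) × Fin 4)

/-- Hidden indices: `inl true` = constant-1 unit, `inl false` = decaying unit,
then storage units, then `p`-, `q`- and `S`-units for each target. -/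
abbrev Hix (m : ℕ) := Bool ⊕ ((Fin (m+2) × Bool) ⊕ ((Tgt m ⊕ Tgt m) ⊕ Tgt m))

def sgn (b : Bool) : ℝ := if b then 1 else -1

def s1 : Fin 4 → ℝ := ![1, -1, 1, -1]
def s2 : Fin 4 → ℝ := ![1, -1, -1, 1]

/-- Row of `A_x` for a target. -/
def lam (M : ℝ) : Tgt m → Fin (m+2) → ℝ
  | .inl (i, b) => fun j => if j = i then sgn b / M else 0
  | .inr (k, j4) => fun j =>
      (if j = k.castSucc then s1 j4 / (2*M) else 0) +
      (if j = k.succ then s2 j4 / (2*M) else 0)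

def eI : Hix m := .inl true
def cI : Hix m := .inl false
def stI (i : Fin (m+2)) (b : Bool) : Hix m := .inr (.inl (i, b))
def pI (τ : Tgt m) : Hix m := .inr (.inr (.inl (.inl τ)))
def qI (τ : Tgt m) : Hix m := .inr (.inr (.inl (.inr τ)))
def SI (τ : Tgt m) : Hix m := .inr (.inr (.inr τ))

def AhM (m : ℕ) : Matrix (Hix m) (Hix m) ℝ := fun k =>
  match k with
  | .inl true => 0
  | .inl false => fun k' => (if k' = cI then (1:ℝ)/4 else 0) + (if k' = eI then -(1/2) else 0)
  | .inr (.inl s) => fun k' => if k' = stI s.1 s.2 then 1 else 0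
  | .inr (.inr (.inl (.inl τ))) =>
      fun k' => (if k' = pI τ then (1:ℝ)/2 else 0) + (if k' = qI τ then -1 else 0)
  | .inr (.inr (.inl (.inr τ))) =>
      fun k' => (if k' = pI τ then (1:ℝ)/2 else 0) + (if k' = qI τ then -1 else 0) +
        (if k' = cI then -(1/4) else 0) + (if k' = eI then (1:ℝ)/2 else 0)
  | .inr (.inr (.inr τ)) =>
      fun k' => (if k' = SI τ then (1:ℝ) else 0) + (if k' = pI τ then -(1/2) else 0) +
        (if k' = qI τ then 1 else 0)

def AxM (m : ℕ) (M : ℝ) : Matrix (Hix m) (Fin (m+2)) ℝ := fun k =>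
  match k with
  | .inl _ => 0
  | .inr (.inl (i, b)) => fun j => if j = i then sgn b / M else 0
  | .inr (.inr (.inl (.inl τ))) => lam M τ
  | .inr (.inr (.inl (.inr τ))) => lam M τ
  | .inr (.inr (.inr τ)) => lam M τ

def bhM (m : ℕ) : Hix m → ℝ := fun k =>
  match k with
  | .inl true => 1
  | .inl false => 1/2
  | .inr (.inl _) => 0
  | .inr (.inr (.inl (.inl _))) => 0
  | .inr (.inr (.inl (.inr _))) => -(1/2)
  | .inr (.inr (.inr _)) => 0

def sqRow (m : ℕ) (M : ℝ) (i : Fin (m+2)) : Hix m → ℝ := fun k' =>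
  (if k' = SI (.inl (i, true)) then M^2 else 0) + (if k' = SI (.inl (i, false)) then M^2 else 0)

def prodRow (m : ℕ) (M : ℝ) (k : Fin (m+1)) : Hix m → ℝ := fun k' =>
  (if k' = SI (.inr (k, 0)) then M^2 else 0) + (if k' = SI (.inr (k, 1)) then M^2 else 0) +
  (if k' = SI (.inr (k, 2)) then -M^2 else 0) + (if k' = SI (.inr (k, 3)) then -M^2 else 0)

def AoM (m : ℕ) (M : ℝ) : Matrix (Fin (2*m+3)) (Hix m) ℝ := fun i =>
  if (i : ℕ) = 0 then prodRow m M (Fin.last m)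
  else if (i : ℕ) = 2*m+2 then
    fun k' => (if k' = stI (Fin.last (m+1)) true then M else 0) +
      (if k' = stI (Fin.last (m+1)) false then -M else 0)
  else if h1 : (i : ℕ) % 2 = 1 then sqRow m M ⟨((i : ℕ) - 1)/2, by omega⟩
  else prodRow m M ⟨(i : ℕ)/2 - 1, by have := i.isLt; omega⟩

def net (m : ℕ) (M : ℝ) : RNN (Fin (m+2)) (Hix m) (Fin (2*m+3)) :=
  ⟨AhM m, AxM m M, AoM m M, bhM m, 0⟩

/-- dot product of a target row with the input. -/
def dt (M : ℝ) (τ : Tgt m) (x : Fin (m+2) → ℝ) : ℝ := ∑ j, lam M τ j * x j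

/-- The target value fed to the square approximator. -/
def wv (M : ℝ) (τ : Tgt m) (x : Fin (m+2) → ℝ) : ℝ := max 0 (dt M τ x)

/-- The closed form of the hidden state. -/
def hv (M : ℝ) (x : Fin (m+2) → ℝ) (t : ℕ) : Hix m → ℝ := fun k =>
  match k with
  | .inl true => 1
  | .inl false => 1/2 * (1/4)^t
  | .inr (.inl (i, b)) => max 0 (sgn b * x i / M)
  | .inr (.inr (.inl (.inl τ))) => g^[t] (wv M τ x) * (1/4)^t
  | .inr (.inr (.inl (.inr τ))) => max 0 (g^[t] (wv M τ x) - 1/2) * (1/4)^t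
  | .inr (.inr (.inr τ)) => F t (wv M τ x)

end S16
end
namespace S16
variable {m : ℕ}

lemma sum_single {α : Type*} [Fintype α] [DecidableEq α] (a : α) (c : ℝ) (v : α → ℝ) :
    ∑ j, (if j = a then c else 0) * v j = c * v a := by
  simp [ite_mul, Finset.sum_ite_eq']

lemma abs_sgn (b : Bool) : |sgn b| = 1 := by cases b <;> simp [sgn]

lemma abs_s1 (j : Fin 4) : |s1 j| = 1 := by fin_cases j <;> simp [s1]
lemma abs_s2 (j : Fin 4) : |s2 j| = 1 := by fin_cases j <;> simp [s2]

lemma dt_inl (M : ℝ) (i : Fin (m+2)) (b : Bool) (x : Fin (m+2) → ℝ) :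
    dt M (.inl (i, b)) x = sgn b / M * x i := by
  simp only [dt, lam, sum_single]

lemma dt_inr (M : ℝ) (k : Fin (m+1)) (j4 : Fin 4) (x : Fin (m+2) → ℝ) :
    dt M (.inr (k, j4)) x = s1 j4 / (2*M) * x k.castSucc + s2 j4 / (2*M) * x k.succ := by
  simp only [dt, lam, add_mul, Finset.sum_add_distrib, sum_single]

lemma abs_dt_le {M : ℝ} (hM : 1 ≤ M) {x : Fin (m+2) → ℝ} (hx : ∀ i, |x i| ≤ M)
    (τ : Tgt m) : |dt M τ x| ≤ 1 := by
  have hM0 : (0:ℝ) < M := by linarith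
  rcases τ with ⟨i, b⟩ | ⟨k, j4⟩
  · rw [dt_inl, abs_mul, abs_div, abs_sgn, abs_of_pos hM0,
      div_mul_eq_mul_div, one_mul, div_le_one hM0]
    exact hx i
  · rw [dt_inr]
    have h1 : |s1 j4 / (2*M) * x k.castSucc| ≤ 1/2 := by
      rw [abs_mul, abs_div, abs_s1, abs_of_pos (by linarith : (0:ℝ) < 2*M),
        div_mul_eq_mul_div, one_mul, div_le_div_iff₀ (by linarith) (by norm_num)]
      nlinarith [hx k.castSucc]
    have h2 : |s2 j4 / (2*M) * x k.succ| ≤ 1/2 := by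
      rw [abs_mul, abs_div, abs_s2, abs_of_pos (by linarith : (0:ℝ) < 2*M),
        div_mul_eq_mul_div, one_mul, div_le_div_iff₀ (by linarith) (by norm_num)]
      nlinarith [hx k.succ]
    calc |_| ≤ |s1 j4 / (2*M) * x k.castSucc| + |s2 j4 / (2*M) * x k.succ| := abs_add_le _ _
      _ ≤ 1 := by linarith

lemma wv_mem {M : ℝ} (hM : 1 ≤ M) {x : Fin (m+2) → ℝ} (hx : ∀ i, |x i| ≤ M)
    (τ : Tgt m) : 0 ≤ wv M τ x ∧ wv M τ x ≤ 1 := by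
  refine ⟨le_max_left _ _, ?_⟩
  have := abs_dt_le hM hx τ
  rw [abs_le] at this
  exact max_le (by norm_num) this.2

lemma max0_max0_sub {a c : ℝ} (hc : 0 ≤ c) : max 0 (max 0 a - c) = max 0 (a - c) := by
  rcases le_total a 0 with h | h
  · rw [max_eq_left h, max_eq_left (by linarith), max_eq_left (by linarith)]
  · rw [max_eq_right h]

lemma max0_scale {c A : ℝ} (hc : 0 ≤ c) : max 0 (c * A) = max 0 A * c := by
  rcases le_total A 0 with h | h
  · rw [max_eq_left h, max_eq_left (by nlinarith), zero_mul]
  · rw [max_eq_right h, max_eq_right (mul_nonneg hc h), mul_comm]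

lemma g_eval {y : ℝ} (hy : 0 ≤ y) : g y = 2*y - 4 * max 0 (y - 1/2) := by
  rw [g, max_eq_right hy]

/-- The closed form for the hidden state of the network. -/
lemma hid_eq {M : ℝ} (hM : 1 ≤ M) {x : Fin (m+2) → ℝ} (hx : ∀ i, |x i| ≤ M) :
    ∀ t, (net m M).hid x t = hv M x t := by
  have hM0 : (0:ℝ) < M := by linarith
  intro t
  induction t with
  | zero =>
    funext k
    show relu ((AxM m M).mulVec x + bhM m) k = _
    rcases k with b | (⟨i, b⟩ | ((τ | τ) | τ))
    · cases b <;>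
        simp [relu, Matrix.mulVec, dotProduct, AxM, bhM, hv]
    · have hdot : (AxM m M).mulVec x (stI i b) = sgn b / M * x i := by
        simp only [Matrix.mulVec, dotProduct, AxM, stI, sum_single]
      simp only [relu, Pi.add_apply, stI] at *
      rw [hdot]
      show max 0 (sgn b / M * x i + 0) = hv M x 0 (stI i b)
      rw [add_zero]
      show _ = max 0 (sgn b * x i / M)
      congr 1
      ring
    · -- p unit at time 0
      have hdot : (AxM m M).mulVec x (pI τ) = dt M τ x := rfl
      show max 0 ((AxM m M).mulVec x (pI τ) + bhM m (pI τ)) = hv M x 0 (pI τ)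
      rw [hdot]
      show max 0 (dt M τ x + 0) = g^[0] (wv M τ x) * (1/4)^0
      simp [wv]
    · -- q unit at time 0
      have hdot : (AxM m M).mulVec x (qI τ) = dt M τ x := rfl
      show max 0 ((AxM m M).mulVec x (qI τ) + bhM m (qI τ)) = hv M x 0 (qI τ)
      rw [hdot]
      show max 0 (dt M τ x + -(1/2)) = max 0 (g^[0] (wv M τ x) - 1/2) * (1/4)^0
      rw [Function.iterate_zero_apply, pow_zero, mul_one, wv,
        max0_max0_sub (by norm_num : (0:ℝ) ≤ 1/2), ← sub_eq_add_neg]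
    · -- S unit at time 0
      have hdot : (AxM m M).mulVec x (SI τ) = dt M τ x := rfl
      show max 0 ((AxM m M).mulVec x (SI τ) + bhM m (SI τ)) = hv M x 0 (SI τ)
      rw [hdot]
      show max 0 (dt M τ x + 0) = F 0 (wv M τ x)
      rw [add_zero]; rfl
  | succ t ih =>
    funext k
    show relu ((AhM m).mulVec ((net m M).hid x t) + bhM m) k = _
    rw [ih]
    set h := hv M x t with hh
    rcases k with b | (⟨i, b⟩ | ((τ | τ) | τ))
    · cases b
      · -- decaying unit c
        have hdot : (AhM m).mulVec h cI = 1/4 * h cI + -(1/2) * h eI := by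
          simp [Matrix.mulVec, dotProduct, AhM, eI, cI, stI, pI, qI, SI, add_mul, Finset.sum_add_distrib, ite_mul, Finset.sum_ite_eq']
        show max 0 ((AhM m).mulVec h cI + bhM m cI) = hv M x (t+1) cI
        rw [hdot]
        show max 0 (1/4 * h cI + -(1/2) * h eI + 1/2) = 1/2 * (1/4)^(t+1)
        have h1 : h cI = 1/2 * (1/4)^t := rfl
        have h2 : h eI = 1 := rfl
        rw [h1, h2, show (1:ℝ)/4 * (1/2 * (1/4)^t) + -(1/2) * 1 + 1/2 = 1/2 * (1/4)^(t+1) by ring]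
        exact max_eq_right (by positivity)
      · -- constant unit e
        have hdot : (AhM m).mulVec h eI = 0 := by
          simp [Matrix.mulVec, dotProduct, AhM, eI]
        show max 0 ((AhM m).mulVec h eI + bhM m eI) = hv M x (t+1) eI
        rw [hdot]
        show max 0 (0 + 1) = 1
        norm_num
    · -- storage units
      have hdot : (AhM m).mulVec h (stI i b) = h (stI i b) := by
        simp [Matrix.mulVec, dotProduct, AhM, eI, cI, stI, pI, qI, SI, add_mul, Finset.sum_add_distrib, ite_mul, Finset.sum_ite_eq']
      show max 0 ((AhM m).mulVec h (stI i b) + bhM m (stI i b)) = hv M x (t+1) (stI i b)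
      rw [hdot]
      show max 0 (h (stI i b) + 0) = max 0 (sgn b * x i / M)
      rw [add_zero]
      show max 0 (max 0 (sgn b * x i / M)) = _
      exact max_eq_right (le_max_left _ _)
    · -- p unit
      have hwm := wv_mem hM hx τ
      have hym := gi_mem t hwm.1 hwm.2
      set w := wv M τ x with hwdef
      set y := g^[t] w with hydef
      have hgy := g_mem hym.1 hym.2
      have hit : g^[t+1] w = g y := Function.iterate_succ_apply' g t w
      have hp : h (pI τ) = y * (1/4)^t := rfl
      have hq : h (qI τ) = max 0 (y - 1/2) * (1/4)^t := rfl
      have hS : h (SI τ) = F t w := rfl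
      have hc : h cI = 1/2 * (1/4)^t := rfl
      have he : h eI = 1 := rfl
      show max 0 ((AhM m).mulVec h (pI τ) + bhM m (pI τ)) = hv M x (t+1) (pI τ)
      have hdot : (AhM m).mulVec h (pI τ) = 1/2 * h (pI τ) + -1 * h (qI τ) := by
        simp [Matrix.mulVec, dotProduct, AhM, eI, cI, stI, pI, qI, SI, add_mul, Finset.sum_add_distrib, ite_mul, Finset.sum_ite_eq']
      rw [hdot]
      show max 0 (1/2 * h (pI τ) + -1 * h (qI τ) + 0) = g^[t+1] w * (1/4)^(t+1)
      rw [hp, hq, hit, g_eval hym.1,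
        show (1:ℝ)/2 * (y * (1/4)^t) + -1 * (max 0 (y - 1/2) * (1/4)^t) + 0
          = (2*y - 4 * max 0 (y - 1/2)) * (1/4)^(t+1) by ring]
      refine max_eq_right ?_
      rw [← g_eval hym.1]
      exact mul_nonneg hgy.1 (by positivity)
    · -- q unit
      have hwm := wv_mem hM hx τ
      have hym := gi_mem t hwm.1 hwm.2
      set w := wv M τ x with hwdef
      set y := g^[t] w with hydef
      have hgy := g_mem hym.1 hym.2
      have hit : g^[t+1] w = g y := Function.iterate_succ_apply' g t w
      have hp : h (pI τ) = y * (1/4)^t := rfl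
      have hq : h (qI τ) = max 0 (y - 1/2) * (1/4)^t := rfl
      have hS : h (SI τ) = F t w := rfl
      have hc : h cI = 1/2 * (1/4)^t := rfl
      have he : h eI = 1 := rfl
      show max 0 ((AhM m).mulVec h (qI τ) + bhM m (qI τ)) = hv M x (t+1) (qI τ)
      have hdot : (AhM m).mulVec h (qI τ)
          = 1/2 * h (pI τ) + -1 * h (qI τ) + -(1/4) * h cI + 1/2 * h eI := by
        simp [Matrix.mulVec, dotProduct, AhM, eI, cI, stI, pI, qI, SI, add_mul, Finset.sum_add_distrib, ite_mul, Finset.sum_ite_eq']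
      rw [hdot]
      show max 0 (1/2 * h (pI τ) + -1 * h (qI τ) + -(1/4) * h cI + 1/2 * h eI + -(1/2))
          = max 0 (g^[t+1] w - 1/2) * (1/4)^(t+1)
      rw [hp, hq, hc, he, hit, g_eval hym.1,
        show (1:ℝ)/2 * (y * (1/4)^t) + -1 * (max 0 (y - 1/2) * (1/4)^t)
            + -(1/4) * (1/2 * (1/4)^t) + 1/2 * 1 + -(1/2)
          = (1/4)^(t+1) * ((2*y - 4 * max 0 (y - 1/2)) - 1/2) by ring,
        max0_scale (by positivity : (0:ℝ) ≤ (1/4)^(t+1))]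
    · -- S unit
      have hwm := wv_mem hM hx τ
      have hym := gi_mem t hwm.1 hwm.2
      set w := wv M τ x with hwdef
      set y := g^[t] w with hydef
      have hgy := g_mem hym.1 hym.2
      have hit : g^[t+1] w = g y := Function.iterate_succ_apply' g t w
      have hp : h (pI τ) = y * (1/4)^t := rfl
      have hq : h (qI τ) = max 0 (y - 1/2) * (1/4)^t := rfl
      have hS : h (SI τ) = F t w := rfl
      have hc : h cI = 1/2 * (1/4)^t := rfl
      have he : h eI = 1 := rfl
      show max 0 ((AhM m).mulVec h (SI τ) + bhM m (SI τ)) = hv M x (t+1) (SI τ)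
      have hdot : (AhM m).mulVec h (SI τ)
          = 1 * h (SI τ) + -(1/2) * h (pI τ) + 1 * h (qI τ) := by
        simp [Matrix.mulVec, dotProduct, AhM, eI, cI, stI, pI, qI, SI, add_mul, Finset.sum_add_distrib, ite_mul, Finset.sum_ite_eq']
      rw [hdot]
      show max 0 (1 * h (SI τ) + -(1/2) * h (pI τ) + 1 * h (qI τ) + 0) = F (t+1) w
      rw [hp, hq, hS,
        show (1:ℝ) * F t w + -(1/2) * (y * (1/4)^t) + 1 * (max 0 (y - 1/2) * (1/4)^t) + 0
          = F t w - (2*y - 4 * max 0 (y - 1/2)) * (1/4)^(t+1) by ring,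
        ← g_eval hym.1, ← hit,
        show F t w - g^[t+1] w * (1/4)^(t+1) = F (t+1) w from rfl]
      exact max_eq_right (F_nonneg (t+1) hwm.1 hwm.2)

end S16
namespace S16
variable {m : ℕ}

lemma max0_sub_max0_neg (v : ℝ) : max 0 v - max 0 (-v) = v := by
  rcases le_total v 0 with h | h
  · rw [max_eq_left h, max_eq_right (by linarith)]; ring
  · rw [max_eq_right h, max_eq_left (by linarith)]; ring

lemma wv_inl (M : ℝ) (i : Fin (m+2)) (b : Bool) (x : Fin (m+2) → ℝ) :
    wv M (.inl (i, b)) x = max 0 (sgn b * (x i / M)) := by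
  rw [wv, dt_inl]; congr 1; ring

lemma wv_inr0 (M : ℝ) (k : Fin (m+1)) (x : Fin (m+2) → ℝ) :
    wv M (.inr (k, 0)) x = max 0 ((x k.castSucc / M + x k.succ / M)/2) := by
  rw [wv, dt_inr]; congr 1; simp [s1, s2]; ring

lemma wv_inr1 (M : ℝ) (k : Fin (m+1)) (x : Fin (m+2) → ℝ) :
    wv M (.inr (k, 1)) x = max 0 (-((x k.castSucc / M + x k.succ / M)/2)) := by
  rw [wv, dt_inr]; congr 1; simp [s1, s2]; ring

lemma wv_inr2 (M : ℝ) (k : Fin (m+1)) (x : Fin (m+2) → ℝ) :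
    wv M (.inr (k, 2)) x = max 0 ((x k.castSucc / M - x k.succ / M)/2) := by
  rw [wv, dt_inr]; congr 1; simp [s1, s2]; ring

lemma wv_inr3 (M : ℝ) (k : Fin (m+1)) (x : Fin (m+2) → ℝ) :
    wv M (.inr (k, 3)) x = max 0 (-((x k.castSucc / M - x k.succ / M)/2)) := by
  rw [wv, dt_inr]; congr 1; simp [s1, s2]; ring

/-- Error/bound estimate for the product approximation. -/
lemma prod_est (t : ℕ) {a b : ℝ} (ha : |a| ≤ 1) (hb : |b| ≤ 1) :
    |(F t (max 0 ((a+b)/2)) + F t (max 0 (-((a+b)/2)))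
      - (F t (max 0 ((a-b)/2)) + F t (max 0 (-((a-b)/2))))) - a*b| ≤ 1/2 * (1/4)^t ∧
    |F t (max 0 ((a+b)/2)) + F t (max 0 (-((a+b)/2)))
      - (F t (max 0 ((a-b)/2)) + F t (max 0 (-((a-b)/2))))| ≤ 1 := by
  rw [abs_le] at ha hb
  have hA := F_pm t (v := (a+b)/2) (by rw [abs_le]; constructor <;> linarith)
  have hB := F_pm t (v := (a-b)/2) (by rw [abs_le]; constructor <;> linarith)
  have hab : ((a+b)/2)^2 - ((a-b)/2)^2 = a*b := by ring
  obtain ⟨hA0, hA1, hAe⟩ := hA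
  obtain ⟨hB0, hB1, hBe⟩ := hB
  rw [abs_le] at hAe hBe
  constructor
  · rw [abs_le]; constructor <;> nlinarith
  · rw [abs_le]; constructor <;> linarith

/-- Evaluation of a square row against the hidden state. -/
lemma dot_sqRow (M : ℝ) (x : Fin (m+2) → ℝ) (t : ℕ) (i0 : Fin (m+2)) :
    ∑ k', sqRow m M i0 k' * hv M x t k'
      = M^2 * (F t (wv M (.inl (i0, true)) x) + F t (wv M (.inl (i0, false)) x)) := by
  simp [sqRow, SI, add_mul, Finset.sum_add_distrib, ite_mul, Finset.sum_ite_eq', hv]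
  ring

/-- Evaluation of a product row against the hidden state. -/
lemma dot_prodRow (M : ℝ) (x : Fin (m+2) → ℝ) (t : ℕ) (k : Fin (m+1)) :
    ∑ k', prodRow m M k k' * hv M x t k'
      = M^2 * ((F t (wv M (.inr (k, 0)) x) + F t (wv M (.inr (k, 1)) x))
        - (F t (wv M (.inr (k, 2)) x) + F t (wv M (.inr (k, 3)) x))) := by
  simp [prodRow, SI, add_mul, Finset.sum_add_distrib, ite_mul, Finset.sum_ite_eq', hv]
  ring

/-- All hidden units lie in `[0,1]`. -/
lemma hv_mem {M : ℝ} (hM : 1 ≤ M) {x : Fin (m+2) → ℝ} (hx : ∀ i, |x i| ≤ M)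
    (t : ℕ) (k : Hix m) : 0 ≤ hv M x t k ∧ hv M x t k ≤ 1 := by
  have hM0 : (0:ℝ) < M := by linarith
  have hq : (0:ℝ) ≤ (1/4)^t ∧ ((1:ℝ)/4)^t ≤ 1 :=
    ⟨by positivity, pow_le_one₀ (by norm_num) (by norm_num)⟩
  rcases k with b | (⟨i, b⟩ | ((τ | τ) | τ))
  · cases b
    · exact ⟨by show (0:ℝ) ≤ 1/2*(1/4)^t; positivity,
        by show (1:ℝ)/2*(1/4)^t ≤ 1; nlinarith [hq.1, hq.2]⟩
    · exact ⟨by norm_num [hv], by norm_num [hv]⟩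
  · refine ⟨le_max_left _ _, ?_⟩
    show max 0 (sgn b * x i / M) ≤ 1
    refine max_le (by norm_num) ?_
    have : |sgn b * x i / M| ≤ 1 := by
      rw [abs_div, abs_mul, abs_sgn, one_mul, abs_of_pos hM0, div_le_one hM0]
      exact hx i
    rw [abs_le] at this; exact this.2
  · have hwm := wv_mem hM hx τ
    have hym := gi_mem t hwm.1 hwm.2
    show 0 ≤ g^[t] (wv M τ x) * (1/4)^t ∧ g^[t] (wv M τ x) * (1/4)^t ≤ 1
    exact ⟨mul_nonneg hym.1 hq.1, by nlinarith [hym.2, hq.1, hq.2]⟩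
  · have hwm := wv_mem hM hx τ
    have hym := gi_mem t hwm.1 hwm.2
    show 0 ≤ max 0 (g^[t] (wv M τ x) - 1/2) * (1/4)^t ∧
      max 0 (g^[t] (wv M τ x) - 1/2) * (1/4)^t ≤ 1
    have h1 : max 0 (g^[t] (wv M τ x) - 1/2) ≤ 1 := max_le (by norm_num) (by linarith [hym.2])
    exact ⟨mul_nonneg (le_max_left _ _) hq.1,
      by nlinarith [le_max_left (0:ℝ) (g^[t] (wv M τ x) - 1/2), hq.1, hq.2]⟩
  · have hwm := wv_mem hM hx τ
    show 0 ≤ F t (wv M τ x) ∧ F t (wv M τ x) ≤ 1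
    exact ⟨F_nonneg t hwm.1 hwm.2, le_trans (F_le t hwm.1 hwm.2) hwm.2⟩

end S16
namespace S16
variable {m : ℕ}

def xe (m : ℕ) (x : Fin (m+2) → ℝ) (j : ℕ) : ℝ := if h : j < m+2 then x ⟨j, h⟩ else 0

/-- The target function in the `m`-parametrized coordinates. -/
def G (m : ℕ) (x : Fin (m+2) → ℝ) (i : Fin (2*m+3)) : ℝ :=
  if (i : ℕ) = 0 then xe m x m * xe m x (m+1)
  else if (i : ℕ) = 2*m+2 then xe m x (m+1)
  else if (i : ℕ) % 2 = 1 then (xe m x (((i : ℕ)+1)/2 - 1))^2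
  else xe m x ((i : ℕ)/2 - 1) * xe m x ((i : ℕ)/2)

lemma xe_eq {j : ℕ} (x : Fin (m+2) → ℝ) (h : j < m+2) : xe m x j = x ⟨j, h⟩ := dif_pos h

/-- Estimate for a product row. -/
lemma prod_case {M : ℝ} (hM : 1 ≤ M) {x : Fin (m+2) → ℝ} (hx : ∀ i, |x i| ≤ M)
    (t : ℕ) (k : Fin (m+1)) :
    |∑ k', prodRow m M k k' * hv M x t k' - x k.castSucc * x k.succ| ≤ M^2/2 * (1/4)^t ∧
    |∑ k', prodRow m M k k' * hv M x t k'| ≤ M^2 := by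
  have hM0 : (0:ℝ) < M := by linarith
  set a := x k.castSucc / M with hadef
  set b := x k.succ / M with hbdef
  have ha : |a| ≤ 1 := by
    rw [hadef, abs_div, abs_of_pos hM0, div_le_one hM0]; exact hx k.castSucc
  have hb : |b| ≤ 1 := by
    rw [hbdef, abs_div, abs_of_pos hM0, div_le_one hM0]; exact hx k.succ
  have hxa : x k.castSucc = M * a := by rw [hadef]; field_simp
  have hxb : x k.succ = M * b := by rw [hbdef]; field_simp
  have hdot : ∑ k', prodRow m M k k' * hv M x t k'
      = M^2 * ((F t (max 0 ((a+b)/2)) + F t (max 0 (-((a+b)/2))))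
        - (F t (max 0 ((a-b)/2)) + F t (max 0 (-((a-b)/2))))) := by
    rw [dot_prodRow, wv_inr0, wv_inr1, wv_inr2, wv_inr3]
  obtain ⟨he, hb1⟩ := prod_est t ha hb
  set P := (F t (max 0 ((a+b)/2)) + F t (max 0 (-((a+b)/2))))
        - (F t (max 0 ((a-b)/2)) + F t (max 0 (-((a-b)/2)))) with hP
  have hM2 : (0:ℝ) ≤ M^2 := by positivity
  constructor
  · rw [hdot, hxa, hxb, show M^2 * P - M * a * (M * b) = M^2 * (P - a*b) by ring,
      abs_mul, abs_of_nonneg hM2]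
    calc M^2 * |P - a*b| ≤ M^2 * (1/2 * (1/4)^t) := by
          exact mul_le_mul_of_nonneg_left he hM2
      _ = M^2/2 * (1/4)^t := by ring
  · rw [hdot, abs_mul, abs_of_nonneg hM2]
    nlinarith
/-- Estimate for a square row. -/
lemma sq_case {M : ℝ} (hM : 1 ≤ M) {x : Fin (m+2) → ℝ} (hx : ∀ i, |x i| ≤ M)
    (t : ℕ) (i0 : Fin (m+2)) :
    |∑ k', sqRow m M i0 k' * hv M x t k' - (x i0)^2| ≤ M^2/2 * (1/4)^t ∧
    |∑ k', sqRow m M i0 k' * hv M x t k'| ≤ M^2 := by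
  have hM0 : (0:ℝ) < M := by linarith
  set u := x i0 / M with hudef
  have hu : |u| ≤ 1 := by
    rw [hudef, abs_div, abs_of_pos hM0, div_le_one hM0]; exact hx i0
  have hxu : x i0 = M * u := by rw [hudef]; field_simp
  have hdot : ∑ k', sqRow m M i0 k' * hv M x t k'
      = M^2 * (F t (max 0 u) + F t (max 0 (-u))) := by
    rw [dot_sqRow, wv_inl, wv_inl]
    simp [sgn, hudef]
  obtain ⟨hS0, hS1, hSe⟩ := F_pm t hu
  have hM2 : (0:ℝ) ≤ M^2 := by positivity
  constructor
  · rw [hdot, hxu, show M^2 * (F t (max 0 u) + F t (max 0 (-u))) - (M*u)^2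
        = M^2 * ((F t (max 0 u) + F t (max 0 (-u))) - u^2) by ring,
      abs_mul, abs_of_nonneg hM2]
    calc M^2 * |(F t (max 0 u) + F t (max 0 (-u))) - u^2|
        ≤ M^2 * (1/4 * (1/4)^t) := mul_le_mul_of_nonneg_left hSe hM2
      _ ≤ M^2/2 * (1/4)^t := by nlinarith [pow_nonneg (by norm_num : (0:ℝ) ≤ 1/4) t]
  · rw [hdot, abs_mul, abs_of_nonneg hM2,
      abs_of_nonneg hS0]
    nlinarith


end S16
namespace S16
variable {m : ℕ}

set_option maxHeartbeats 2000000 in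
/-- Core estimates for the network. -/
theorem core {M : ℝ} (hM : 1 ≤ M) {x : Fin (m+2) → ℝ} (hx : ∀ i, |x i| ≤ M) (t : ℕ) :
    (∀ i, |(net m M).out x t i - G m x i| ≤ M^2/2 * (1/4)^t) ∧
    (∀ i, |(net m M).out x t i| ≤ M^2) ∧
    (∀ k, |(net m M).hid x t k| ≤ 1) := by
  have hM0 : (0:ℝ) < M := by linarith
  have hM2 : (0:ℝ) ≤ M^2 := by positivity
  have hout : ∀ i, (net m M).out x t i = ∑ k', AoM m M i k' * hv M x t k' := by
    intro i
    show (AoM m M).mulVec ((net m M).hid x t) i + (0 : Fin (2*m+3) → ℝ) i = _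
    rw [hid_eq hM hx]
    simp [Matrix.mulVec, dotProduct]
  have key : ∀ i, |(net m M).out x t i - G m x i| ≤ M^2/2 * (1/4)^t ∧
      |(net m M).out x t i| ≤ M^2 := by
    intro i
    rw [hout]
    by_cases hi0 : (i : ℕ) = 0
    · have hrow : AoM m M i = prodRow m M (Fin.last m) := by
        simp only [AoM]; rw [if_pos hi0]
      rw [hrow]
      have e1 : (Fin.last m).castSucc = (⟨m, by omega⟩ : Fin (m+2)) := by ext; simp
      have e2 : (Fin.last m).succ = (⟨m+1, by omega⟩ : Fin (m+2)) := by ext; simp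
      have hj1 : m < m+2 := by omega
      have hj2 : m+1 < m+2 := by omega
      have hG : G m x i = x (Fin.last m).castSucc * x (Fin.last m).succ := by
        rw [G, if_pos hi0, xe_eq x hj1, xe_eq x hj2, e1, e2]
      rw [hG]
      exact prod_case hM hx t (Fin.last m)
    · by_cases hiL : (i : ℕ) = 2*m+2
      · have hrow : AoM m M i = fun k' =>
            (if k' = stI (Fin.last (m+1)) true then M else 0) +
            (if k' = stI (Fin.last (m+1)) false then -M else 0) := by
          simp only [AoM]; rw [if_neg hi0, if_pos hiL]
        rw [hrow]
        have hdot : ∑ k', ((if k' = stI (Fin.last (m+1)) true then M else 0) +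
            (if k' = stI (Fin.last (m+1)) false then -M else 0)) * hv M x t k'
            = x (Fin.last (m+1)) := by
          simp only [stI, hv, sgn, add_mul, ite_mul, Finset.sum_add_distrib]
          simp [stI, hv, sgn, add_mul, ite_mul, Finset.sum_add_distrib, Finset.sum_ite_eq']
          rw [show -x (Fin.last (m+1)) / M = -(x (Fin.last (m+1)) / M) by ring,
            show M * (0 ⊔ (x (Fin.last (m+1)) / M)) + -(M * (0 ⊔ -(x (Fin.last (m+1)) / M)))
              = M * (max 0 (x (Fin.last (m+1)) / M) - max 0 (-(x (Fin.last (m+1)) / M))) by ring,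
            max0_sub_max0_neg]
          field_simp
        rw [hdot]
        have hj1 : m+1 < m+2 := by omega
        have hG : G m x i = x (Fin.last (m+1)) := by
          rw [G, if_neg hi0, if_pos hiL, xe_eq x hj1]
          rfl
        constructor
        · rw [hG, sub_self, abs_zero]; positivity
        · calc |x (Fin.last (m+1))| ≤ M := hx _
            _ ≤ M^2 := by nlinarith
      · by_cases hodd : (i : ℕ) % 2 = 1
        · have hlt : ((i : ℕ) - 1)/2 < m + 2 := by have := i.isLt; omega
          have hrow : AoM m M i = sqRow m M ⟨((i : ℕ) - 1)/2, hlt⟩ := by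
            simp only [AoM]; rw [if_neg hi0, if_neg hiL, dif_pos hodd]
          rw [hrow]
          have hG : G m x i = (x ⟨((i : ℕ) - 1)/2, hlt⟩)^2 := by
            rw [G, if_neg hi0, if_neg hiL, if_pos hodd,
              show ((i:ℕ)+1)/2 - 1 = ((i:ℕ)-1)/2 by omega, xe_eq x hlt]
          rw [hG]
          exact sq_case hM hx t _
        · have hlt : (i : ℕ)/2 - 1 < m + 1 := by have := i.isLt; omega
          set k : Fin (m+1) := ⟨(i : ℕ)/2 - 1, hlt⟩ with hk
          have hrow : AoM m M i = prodRow m M k := by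
            simp only [AoM]; rw [if_neg hi0, if_neg hiL, dif_neg hodd]
          rw [hrow]
          have e1 : k.castSucc = (⟨(i:ℕ)/2 - 1, by omega⟩ : Fin (m+2)) := by
            ext; simp [hk]
          have e2 : k.succ = (⟨(i:ℕ)/2, by have := i.isLt; omega⟩ : Fin (m+2)) := by
            ext; simp [hk]; omega
          have hj1 : (i:ℕ)/2 - 1 < m+2 := by omega
          have hj2 : (i:ℕ)/2 < m+2 := by have := i.isLt; omega
          have hG : G m x i = x k.castSucc * x k.succ := by
            rw [G, if_neg hi0, if_neg hiL, if_neg hodd, xe_eq x hj1, xe_eq x hj2, e1, e2]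
          rw [hG]
          exact prod_case hM hx t k
  refine ⟨fun i => (key i).1, fun i => (key i).2, fun k => ?_⟩
  rw [hid_eq hM hx]
  have := hv_mem hM hx t k
  rw [abs_le]; exact ⟨by linarith [this.1], this.2⟩

end S16
namespace S16

/-- Transport an RNN along equivalences of index types. -/
def rdx {ι κ ω ι' κ' ω' : Type} (eι : ι' ≃ ι) (eκ : κ' ≃ κ) (eω : ω' ≃ ω)
    (R : RNN ι κ ω) : RNN ι' κ' ω' :=
  ⟨R.Ah.submatrix eκ eκ, R.Ax.submatrix eκ eι, R.Ao.submatrix eω eκ,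
    R.bh ∘ eκ, R.bo ∘ eω⟩

lemma hid_rdx {ι κ ω ι' κ' ω' : Type} [Fintype ι] [Fintype κ] [Fintype ι'] [Fintype κ']
    (eι : ι' ≃ ι) (eκ : κ' ≃ κ) (eω : ω' ≃ ω) (R : RNN ι κ ω) (x : ι' → ℝ) (t : ℕ) :
    (rdx eι eκ eω R).hid x t = R.hid (x ∘ eι.symm) t ∘ eκ := by
  induction t with
  | zero =>
    show relu ((R.Ax.submatrix eκ eι).mulVec x + R.bh ∘ eκ) = _
    rw [Matrix.submatrix_mulVec_equiv]
    rfl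
  | succ t ih =>
    show relu ((R.Ah.submatrix eκ eκ).mulVec ((rdx eι eκ eω R).hid x t) + R.bh ∘ eκ) = _
    rw [ih, show R.hid (x ∘ eι.symm) t ∘ eκ = (R.hid (x ∘ eι.symm) t) ∘ (eκ : κ' ≃ κ) from rfl,
      Matrix.submatrix_mulVec_equiv, Function.comp_assoc, Equiv.self_comp_symm,
      Function.comp_id]
    rfl

lemma out_rdx {ι κ ω ι' κ' ω' : Type} [Fintype ι] [Fintype κ] [Fintype ι'] [Fintype κ']
    (eι : ι' ≃ ι) (eκ : κ' ≃ κ) (eω : ω' ≃ ω) (R : RNN ι κ ω) (x : ι' → ℝ) (t : ℕ) :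
    (rdx eι eκ eω R).out x t = R.out (x ∘ eι.symm) t ∘ eω := by
  show (R.Ao.submatrix eω eκ).mulVec ((rdx eι eκ eω R).hid x t) + R.bo ∘ eω = _
  rw [hid_rdx, show R.hid (x ∘ eι.symm) t ∘ eκ = (R.hid (x ∘ eι.symm) t) ∘ (eκ : κ' ≃ κ) from rfl,
    Matrix.submatrix_mulVec_equiv, Function.comp_assoc, Equiv.self_comp_symm,
    Function.comp_id]
  rfl

end S16
set_option maxHeartbeats 1000000 in
/-- Lemma (RNN approximating `f_ℓ`): for `D ≥ 1` and `ℓ ≥ 2` there is an RNN with input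
dimension `2^{ℓ−2}+1`, output dimension `2^{ℓ−1}+1`, and hidden state size at most
`10·2^ℓ` such that for all `x ∈ [−D^{2^{ℓ−1}}, D^{2^{ℓ−1}}]^{2^{ℓ−2}+1}` and `t ∈ ℕ₀`:
`‖(R 𝒟 x)[t] − f_ℓ(x)‖∞ ≤ (D^{2^ℓ}/2)·4^{−t}`, `‖(R 𝒟 x)[t]‖∞ ≤ D^{2^ℓ}`, and
`‖(K 𝒟 x)[t]‖∞ ≤ D`. -/
theorem stmt16 (D : ℝ) (hD : 1 ≤ D) (l : ℕ) (hl : 2 ≤ l) :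
    ∃ (mh : ℕ) (R : RNN (Fin (2 ^ (l - 2) + 1)) (Fin mh) (Fin (2 ^ (l - 1) + 1))),
      mh ≤ 10 * 2 ^ l ∧
      ∀ x : Fin (2 ^ (l - 2) + 1) → ℝ,
        (∀ i, x i ∈ Set.Icc (-(D ^ (2 ^ (l - 1)))) (D ^ (2 ^ (l - 1)))) →
        ∀ t : ℕ,
          ‖R.out x t - fPoly l x‖ ≤ D ^ (2 ^ l) / 2 * (4 : ℝ) ^ (-(t : ℤ)) ∧
          ‖R.out x t‖ ≤ D ^ (2 ^ l) ∧ ‖R.hid x t‖ ≤ D := by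
  classical
  obtain ⟨m, hm⟩ : ∃ m, 2 ^ (l-2) = m + 1 :=
    ⟨2 ^ (l-2) - 1, by have := Nat.one_le_two_pow (n := l-2); omega⟩
  have hA : 2 ^ (l-2) = m + 1 := hm
  have hB : 2 ^ (l-1) = 2*m + 2 := by
    rw [show l - 1 = (l-2) + 1 by omega, pow_succ, hA]; ring
  have hC : 2 ^ l = 4*m + 4 := by
    rw [show l = (l-2) + 2 by omega, pow_add, hA]; ring
  have e1 : 2 ^ (l-2) + 1 = m + 2 := by omega
  have e2 : 2 ^ (l-1) + 1 = 2*m + 3 := by omega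
  set M : ℝ := D ^ (2 ^ (l-1)) with hMdef
  have hM : 1 ≤ M := one_le_pow₀ hD
  have hM0 : (0:ℝ) < M := by linarith
  have hMsq : M ^ 2 = D ^ (2 ^ l) := by
    rw [hMdef, ← pow_mul]
    congr 1
    omega
  set eι : Fin (2 ^ (l-2) + 1) ≃ Fin (m+2) := finCongr e1 with heι
  set eω : Fin (2 ^ (l-1) + 1) ≃ Fin (2*m+3) := finCongr e2 with heω
  set eκ : Fin (Fintype.card (S16.Hix m)) ≃ S16.Hix m := (Fintype.equivFin (S16.Hix m)).symm
    with heκ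
  refine ⟨Fintype.card (S16.Hix m), S16.rdx eι eκ eω (S16.net m M), ?_, ?_⟩
  · -- size bound
    have hcard : Fintype.card (S16.Hix m) = 20*m + 30 := by
      simp [S16.Hix, S16.Tgt, Fintype.card_sum, Fintype.card_prod]
      ring
    rw [hcard, hC]
    omega
  · intro x hx t
    set x' : Fin (m+2) → ℝ := x ∘ eι.symm with hx'def
    have hx' : ∀ i, |x' i| ≤ M := by
      intro i
      have := hx (eι.symm i)
      rw [Set.mem_Icc] at this
      rw [abs_le]
      exact ⟨this.1, this.2⟩
    obtain ⟨hcore1, hcore2, hcore3⟩ := S16.core (m := m) hM hx' t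
    have hout : (S16.rdx eι eκ eω (S16.net m M)).out x t = (S16.net m M).out x' t ∘ eω :=
      S16.out_rdx eι eκ eω (S16.net m M) x t
    have hhid : (S16.rdx eι eκ eω (S16.net m M)).hid x t = (S16.net m M).hid x' t ∘ eκ :=
      S16.hid_rdx eι eκ eω (S16.net m M) x t
    have hconv : (4:ℝ) ^ (-(t:ℤ)) = (1/4) ^ t := by
      rw [zpow_neg, zpow_natCast, one_div, inv_pow]
    have hfg : ∀ i, fPoly l x i = S16.G m x' (eω i) := by
      intro i
      have hxe : ∀ j : ℕ, (if h : j < 2 ^ (l-2) + 1 then x ⟨j, h⟩ else 0) = S16.xe m x' j := by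
        intro j
        rw [S16.xe]
        by_cases h : j < m + 2
        · rw [dif_pos (by omega), dif_pos h]
          show x _ = x' ⟨j, h⟩
          rw [hx'def]
          show x _ = x (eι.symm ⟨j, h⟩)
          congr 1
        · rw [dif_neg (by omega), dif_neg h]
      have hiv : ((eω i : Fin (2*m+3)) : ℕ) = (i : ℕ) := rfl
      simp only [fPoly, S16.G, hiv]
      simp only [hxe]
      simp only [hA, hB, Nat.add_sub_cancel]
    have hRHS : D ^ (2 ^ l) / 2 * (4:ℝ) ^ (-(t:ℤ)) = M^2/2 * (1/4)^t := by
      rw [hMsq, hconv]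
    refine ⟨?_, ?_, ?_⟩
    · rw [hRHS, pi_norm_le_iff_of_nonneg (by positivity)]
      intro i
      rw [Pi.sub_apply, hout, Real.norm_eq_abs, hfg i]
      exact hcore1 (eω i)
    · rw [← hMsq, pi_norm_le_iff_of_nonneg (by positivity)]
      intro i
      rw [hout, Real.norm_eq_abs]
      exact hcore2 (eω i)
    · rw [pi_norm_le_iff_of_nonneg (by linarith)]
      intro k
      rw [hhid, Real.norm_eq_abs]
      calc |(S16.net m M).hid x' t (eκ k)| ≤ 1 := hcore3 (eκ k)
        _ ≤ D := hD
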